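/- arXiv:1406.3077 — 5 statements merged into one kernel-verified Lean document; each statement's English description precedes it below -/
import Mathlib

section
/- Let t and n be positive integers and let F be a family of subsets of [n] that contains every t-element subset of [n]. Then F is t-laminar if and only if every member A of F with |A| = t is contained in exactly one maximal chain of the subfamily F_{≥t} = {B ∈ F : |B| ≥ t} partially ordered by inclusion (a chain is a subfamily totally ordered by inclusion; a maximal chain is one not properly contained in any other chain of F_{≥t}). -/
/-- Every chain inside `S` extends to a maximal chain inside `S`. -/
lemma exists_maximal_chain_in {α : Type*} {r : α → α → Prop} (S : Set α) (c : Set α)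
    (hcS : c ⊆ S) (hc : IsChain r c) :
    ∃ M, c ⊆ M ∧ M ⊆ S ∧ IsChain r M ∧
      ∀ D ⊆ S, IsChain r D → M ⊆ D → M = D := by
  set 𝒮 : Set (Set α) := {D | c ⊆ D ∧ D ⊆ S ∧ IsChain r D} with h𝒮
  have H : ∀ cs ⊆ 𝒮, IsChain (· ⊆ ·) cs → cs.Nonempty → ∃ ub ∈ 𝒮, ∀ s ∈ cs, s ⊆ ub := by
    intro cs hcsS hcs hne
    refine ⟨⋃₀ cs, ⟨?_, ?_, ?_⟩, fun s hs => Set.subset_sUnion_of_mem hs⟩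
    · obtain ⟨D, hD⟩ := hne
      exact (hcsS hD).1.trans (Set.subset_sUnion_of_mem hD)
    · exact Set.sUnion_subset fun D hD => (hcsS hD).2.1
    · intro x hx y hy hxy
      obtain ⟨D1, hD1, hx1⟩ := hx
      obtain ⟨D2, hD2, hy2⟩ := hy
      rcases hcs.total hD1 hD2 with h | h
      · exact (hcsS hD2).2.2 (h hx1) hy2 hxy
      · exact (hcsS hD1).2.2 hx1 (h hy2) hxy
  obtain ⟨m, hcm, hm⟩ := zorn_subset_nonempty 𝒮 H c ⟨Set.Subset.rfl, hcS, hc⟩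
  refine ⟨m, hcm, hm.prop.2.1, hm.prop.2.2, fun D hDS hDch hmD => ?_⟩
  exact hm.eq_of_subset ⟨hcm.trans hmD, hDS, hDch⟩ hmD

/-- For a family `F` of subsets of `[n]` containing all `t`-element subsets, `F` is
`t`-laminar iff every member of cardinality `t` lies in exactly one maximal chain of
the subfamily of members of cardinality at least `t` (ordered by inclusion). -/
theorem tLaminar_iff_unique_maximal_chain (t n : ℕ) (ht : 0 < t) (hn : 0 < n)
    (F : Finset (Finset (Fin n)))
    (hF : ∀ A : Finset (Fin n), A.card = t → A ∈ F) :
    (∀ A ∈ F, ∀ B ∈ F, t ≤ (A ∩ B).card → A ⊆ B ∨ B ⊆ A) ↔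
    (∀ A ∈ F, A.card = t →
      ∃! C : Set (Finset (Fin n)),
        (C ⊆ {B | B ∈ F ∧ t ≤ B.card} ∧ IsChain (· ⊆ ·) C ∧
          (∀ D : Set (Finset (Fin n)), D ⊆ {B | B ∈ F ∧ t ≤ B.card} →
            IsChain (· ⊆ ·) D → C ⊆ D → C = D)) ∧
        A ∈ C) := by
  set S : Set (Finset (Fin n)) := {B | B ∈ F ∧ t ≤ B.card} with hS
  constructor
  · intro hlam A hA hAt
    set CA : Set (Finset (Fin n)) := {B ∈ S | A ⊆ B} with hCA
    -- key: members of any chain-in-S containing A all contain A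
    have key : ∀ (D : Set (Finset (Fin n))), D ⊆ S → IsChain (· ⊆ ·) D → A ∈ D →
        D ⊆ CA := by
      intro D hDS hDch hAD B hB
      rcases eq_or_ne B A with rfl | hne
      · exact ⟨hDS hB, Finset.Subset.rfl⟩
      rcases hDch hB hAD hne with h | h
      · have : B = A := Finset.eq_of_subset_of_card_le h (by rw [hAt]; exact (hDS hB).2)
        exact absurd this hne
      · exact ⟨hDS hB, h⟩
    have hCAchain : IsChain (· ⊆ ·) CA := by
      intro x hx y hy hxy
      apply hlam x hx.1.1 y hy.1.1
      calc t = A.card := hAt.symm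
        _ ≤ (x ∩ y).card := Finset.card_le_card (Finset.subset_inter hx.2 hy.2)
    have hACA : A ∈ CA := ⟨⟨hA, hAt.ge⟩, Finset.Subset.rfl⟩
    refine ⟨CA, ⟨⟨fun B hB => hB.1, hCAchain, ?_⟩, hACA⟩, ?_⟩
    · intro D hDS hDch hsub
      exact Set.Subset.antisymm hsub (key D hDS hDch (hsub hACA))
    · rintro C ⟨⟨hCS, hCch, hCmax⟩, hAC⟩
      exact hCmax CA (fun B hB => hB.1) hCAchain (key C hCS hCch hAC)
  · intro huniq A hA B hB hcard
    obtain ⟨T, hTsub, hTcard⟩ := Finset.exists_subset_card_eq hcard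
    have hTF : T ∈ F := hF T hTcard
    have hTA : T ⊆ A := hTsub.trans Finset.inter_subset_left
    have hTB : T ⊆ B := hTsub.trans Finset.inter_subset_right
    have hAS : A ∈ S := ⟨hA, hTcard ▸ Finset.card_le_card hTA⟩
    have hBS : B ∈ S := ⟨hB, hTcard ▸ Finset.card_le_card hTB⟩
    have hTS : T ∈ S := ⟨hTF, hTcard.ge⟩
    have chain1 : IsChain (· ⊆ ·) ({T, A} : Set (Finset (Fin n))) := by
      rintro x (rfl | rfl) y (rfl | rfl) hxy
      · exact absurd rfl hxy
      · exact Or.inl hTA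
      · exact Or.inr hTA
      · exact absurd rfl hxy
    have chain2 : IsChain (· ⊆ ·) ({T, B} : Set (Finset (Fin n))) := by
      rintro x (rfl | rfl) y (rfl | rfl) hxy
      · exact absurd rfl hxy
      · exact Or.inl hTB
      · exact Or.inr hTB
      · exact absurd rfl hxy
    obtain ⟨M1, hsub1, hM1S, hM1ch, hM1max⟩ := exists_maximal_chain_in S
      ({T, A} : Set (Finset (Fin n))) (by rintro x (rfl | rfl) <;> assumption) chain1
    obtain ⟨M2, hsub2, hM2S, hM2ch, hM2max⟩ := exists_maximal_chain_in S
      ({T, B} : Set (Finset (Fin n))) (by rintro x (rfl | rfl) <;> assumption) chain2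
    obtain ⟨C, _, hCuniq⟩ := huniq T hTF hTcard
    have e1 : M1 = C := hCuniq M1 ⟨⟨hM1S, hM1ch, hM1max⟩, hsub1 (by left; rfl)⟩
    have e2 : M2 = C := hCuniq M2 ⟨⟨hM2S, hM2ch, hM2max⟩, hsub2 (by left; rfl)⟩
    have hAM : A ∈ M1 := hsub1 (by right; rfl)
    have hBM : B ∈ M1 := by rw [e1, ← e2]; exact hsub2 (by right; rfl)
    rcases eq_or_ne A B with rfl | hne
    · exact Or.inl Finset.Subset.rfl
    · exact hM1ch hAM hBM hne
end

section
/- Let f(n) denote the maximum number of sets of cardinality at least 2 in a 2-laminar family of subsets of [n]. Then liminf_{n→∞} f(n)/binom(n,2) ≥ 1.3818. -/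
/-- `f n` is the maximum number of sets of cardinality at least `2` in a `2`-laminar
family of subsets of `[n]`. -/
noncomputable def f (n : ℕ) : ℕ :=
  sSup {m | ∃ F : Finset (Finset (Fin n)),
    (∀ A ∈ F, ∀ B ∈ F, 2 ≤ (A ∩ B).card → A ⊆ B ∨ B ⊆ A) ∧
    (∀ A ∈ F, 2 ≤ A.card) ∧ F.card = m}

/-!
Call a family *linear laminar* if its sets have at least three points and any two of them are
nested or meet in at most one point. Adding all `n.choose 2` pairs to such a family `G` on `[n]`
keeps it 2-laminar, so `f n ≥ n.choose 2 + #G`.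

Linear laminar families are built on grids `κ × R`: put a copy of a family `B` on `κ` along every
line `i ↦ (i, a * x i + b)` and a copy of a family `C` on `R` in every column. Two distinct lines
meet at most once when all differences `x i - x j` are units; for `κ = Fin 49` and `R = ZMod h`
this holds as soon as `h` is coprime to `48!`. The Fano plane plus the whole set, gridded with
itself, gives 448 sets on 49 points, and 449 with the whole set. Using that family as `B`, the
largest linear laminar family `g n` on `n` points satisfies `g (49 * h) ≥ 449 * h ^ 2 + 49 * g h`,
solved by `g n ≈ 449 * n ^ 2 / 2352`; taking `h ≡ 1 [MOD 48!]` close to `n / 49` keeps the error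
`O(n ^ (3 / 2))`. Hence
`f n / n.choose 2 ≥ 1 + 898 / 2352 - o(1) > 1.3818`.

The bound `f n ≤ 2 * n.choose 2` (two distinct sets of equal size share no pair) is needed because
the liminf of a real sequence that is not bounded above is a junk value.
-/

open Finset

variable {α β ι : Type*} [DecidableEq α]

def IsLaminar (t : ℕ) (F : Finset (Finset α)) : Prop :=
  ∀ A ∈ F, ∀ B ∈ F, t ≤ #(A ∩ B) → A ⊆ B ∨ B ⊆ A

structure IsLinearLaminar (G : Finset (Finset α)) : Prop where
  laminar : IsLaminar 2 G
  three_le_card : ∀ A ∈ G, 3 ≤ #A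

theorem IsLaminar.card_filter_card_eq_mul_choose_le [Fintype α] {F : Finset (Finset α)}
    (hF : IsLaminar 2 F) (k : ℕ) :
    #{A ∈ F | #A = k} * k.choose 2 ≤ (Fintype.card α).choose 2 := by
  have hdisj : (F.filter (#· = k) : Set (Finset α)).PairwiseDisjoint (powersetCard 2) := by
    intro A hA B hB hAB
    simp only [mem_coe, mem_filter] at hA hB
    refine disjoint_left.2 fun p hpA hpB => hAB ?_
    rw [mem_powersetCard] at hpA hpB
    have h2 : 2 ≤ #(A ∩ B) := hpA.2 ▸ card_le_card (subset_inter hpA.1 hpB.1)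
    rcases hF A hA.1 B hB.1 h2 with hAB | hBA
    · exact eq_of_subset_of_card_le hAB (by omega)
    · exact (eq_of_subset_of_card_le hBA (by omega)).symm
  calc #{A ∈ F | #A = k} * k.choose 2
      = #((F.filter (#· = k)).biUnion (powersetCard 2)) := by
        rw [card_biUnion hdisj, sum_congr rfl fun A hA => by
          rw [card_powersetCard, (mem_filter.1 hA).2], sum_const, smul_eq_mul]
    _ ≤ #((univ : Finset α).powersetCard 2) :=
        card_le_card fun p hp => by
          obtain ⟨A, -, hpA⟩ := mem_biUnion.1 hp
          exact mem_powersetCard.2 ⟨subset_univ p, (mem_powersetCard.1 hpA).2⟩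
    _ = (Fintype.card α).choose 2 := by rw [card_powersetCard, card_univ]

theorem sum_Icc_inv_choose_two (n : ℕ) :
    ∑ k ∈ Icc 2 (n + 1), (k.choose 2 : ℝ)⁻¹ = 2 - 2 / (n + 1) := by
  induction n with
  | zero => norm_num
  | succ n ih =>
    rw [sum_Icc_succ_top (by omega), ih, Nat.cast_choose_two]
    push_cast
    field_simp
    ring

theorem IsLaminar.card_le_two_mul_choose [Fintype α] {F : Finset (Finset α)}
    (hF : IsLaminar 2 F) (hF2 : ∀ A ∈ F, 2 ≤ #A) :
    #F ≤ 2 * (Fintype.card α).choose 2 := by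
  set n := Fintype.card α
  have hsizes : ∀ A ∈ F, #A ∈ Icc 2 (n + 1) := fun A hA =>
    mem_Icc.2 ⟨hF2 A hA, (card_le_univ A).trans n.le_succ⟩
  have hslice : ∀ k ∈ Icc 2 (n + 1),
      (#{A ∈ F | #A = k} : ℝ) ≤ n.choose 2 * (k.choose 2 : ℝ)⁻¹ := by
    intro k hk
    have hpos : (0 : ℝ) < k.choose 2 := by
      exact_mod_cast Nat.choose_pos (mem_Icc.1 hk).1
    rw [le_mul_inv_iff₀ hpos]
    exact_mod_cast hF.card_filter_card_eq_mul_choose_le k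
  have : (#F : ℝ) ≤ 2 * n.choose 2 := by
    calc (#F : ℝ) = ∑ k ∈ Icc 2 (n + 1), (#{A ∈ F | #A = k} : ℝ) := by
          exact_mod_cast card_eq_sum_card_fiberwise hsizes
      _ ≤ ∑ k ∈ Icc 2 (n + 1), n.choose 2 * (k.choose 2 : ℝ)⁻¹ := sum_le_sum hslice
      _ = n.choose 2 * (2 - 2 / (n + 1)) := by rw [← mul_sum, sum_Icc_inv_choose_two]
      _ ≤ 2 * n.choose 2 := by
          have : (0 : ℝ) ≤ 2 / (n + 1) := by positivity
          nlinarith [(Nat.cast_nonneg (n.choose 2) : (0 : ℝ) ≤ _)]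
  exact_mod_cast this

theorem f_le_two_mul_choose (n : ℕ) : f n ≤ 2 * n.choose 2 := by
  refine csSup_le ⟨0, ∅, by simp, by simp, rfl⟩ ?_
  rintro m ⟨F, hF, hF2, rfl⟩
  simpa using IsLaminar.card_le_two_mul_choose hF hF2

section Constructions

variable [DecidableEq β]

theorem IsLaminar.map {t : ℕ} {F : Finset (Finset α)} (hF : IsLaminar t F) (e : α ↪ β) :
    IsLaminar t (F.map (mapEmbedding e).toEmbedding) := by
  simp only [IsLaminar, mem_map, RelEmbedding.coe_toEmbedding, mapEmbedding_apply]
  rintro _ ⟨A, hA, rfl⟩ _ ⟨B, hB, rfl⟩ h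
  rw [← map_inter, card_map] at h
  simpa only [map_subset_map] using hF A hA B hB h

theorem IsLinearLaminar.map {G : Finset (Finset α)} (hG : IsLinearLaminar G) (e : α ↪ β) :
    IsLinearLaminar (G.map (mapEmbedding e).toEmbedding) where
  laminar := hG.laminar.map e
  three_le_card := by
    simp only [mem_map, RelEmbedding.coe_toEmbedding, mapEmbedding_apply]
    rintro _ ⟨A, hA, rfl⟩
    simpa only [card_map] using hG.three_le_card A hA

theorem IsLinearLaminar.insert_univ [Fintype α] {G : Finset (Finset α)} (hG : IsLinearLaminar G)
    (hα : 3 ≤ Fintype.card α) : IsLinearLaminar (insert univ G) where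
  laminar := by
    simp only [IsLaminar, mem_insert]
    rintro A (rfl | hA) B (rfl | hB) h
    · exact .inl subset_rfl
    · exact .inr (subset_univ B)
    · exact .inl (subset_univ A)
    · exact hG.laminar A hA B hB h
  three_le_card := by
    simp only [mem_insert, forall_eq_or_imp, card_univ]
    exact ⟨hα, hG.three_le_card⟩

variable {t : ℕ} {s : Finset ι} {F : ι → Finset (Finset α)} {P : ι → Finset α}

theorem IsLaminar.biUnion (hF : ∀ i ∈ s, IsLaminar t (F i)) (hFP : ∀ i ∈ s, ∀ A ∈ F i, A ⊆ P i)
    (hP : ∀ i ∈ s, ∀ j ∈ s, i ≠ j → #(P i ∩ P j) < t) : IsLaminar t (s.biUnion F) := by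
  simp only [IsLaminar, mem_biUnion]
  rintro A ⟨i, hi, hA⟩ B ⟨j, hj, hB⟩ h
  obtain rfl | hij := eq_or_ne i j
  · exact hF i hi A hA B hB h
  · have := card_le_card (inter_subset_inter (hFP i hi A hA) (hFP j hj B hB))
    have := hP i hi j hj hij
    omega

theorem card_biUnion_of_card_inter_lt (hFt : ∀ i ∈ s, ∀ A ∈ F i, t ≤ #A)
    (hFP : ∀ i ∈ s, ∀ A ∈ F i, A ⊆ P i) (hP : ∀ i ∈ s, ∀ j ∈ s, i ≠ j → #(P i ∩ P j) < t) :
    #(s.biUnion F) = ∑ i ∈ s, #(F i) := by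
  refine card_biUnion fun i hi j hj hij => disjoint_left.2 fun A hAi hAj => ?_
  have := card_le_card (subset_inter (hFP i hi A hAi) (hFP j hj A hAj))
  have := hFt i hi A hAi
  have := hP i hi j hj hij
  omega

end Constructions

theorem IsLinearLaminar.choose_two_add_card_le_f {n : ℕ} {G : Finset (Finset (Fin n))}
    (hG : IsLinearLaminar G) : n.choose 2 + #G ≤ f n := by
  set pairs := (univ : Finset (Fin n)).powersetCard 2
  have hpairs : ∀ A ∈ pairs, #A = 2 := fun A hA => (mem_powersetCard.1 hA).2
  have hpair_subset : ∀ A ∈ pairs, ∀ B : Finset (Fin n), 2 ≤ #(A ∩ B) → A ⊆ B := fun A hA B h =>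
    inter_eq_left.1 (eq_of_subset_of_card_le inter_subset_left (by rw [hpairs A hA]; exact h))
  have hdisj : Disjoint pairs G := disjoint_left.2 fun A hAp hAG => by
    have := hG.three_le_card A hAG
    rw [hpairs A hAp] at this
    omega
  have hlam : IsLaminar 2 (pairs ∪ G) := by
    simp only [IsLaminar, mem_union]
    rintro A (hA | hA) B hB h
    · exact .inl (hpair_subset A hA B h)
    obtain hB | hB := hB
    · exact .inr (hpair_subset B hB A (by rwa [inter_comm]))
    · exact hG.laminar A hA B hB h
  have htwo : ∀ A ∈ pairs ∪ G, 2 ≤ #A := by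
    simp only [mem_union]
    rintro A (hA | hA)
    · exact (hpairs A hA).ge
    · exact (hG.three_le_card A hA).trans' (by norm_num)
  have hcard : #(pairs ∪ G) = n.choose 2 + #G := by
    rw [card_union_of_disjoint hdisj, card_powersetCard, card_univ, Fintype.card_fin]
  rw [← hcard]
  exact le_csSup ⟨2 * n.choose 2, by
    rintro m ⟨F, hF, hF2, rfl⟩
    simpa using IsLaminar.card_le_two_mul_choose hF hF2⟩ ⟨_, hlam, htwo, rfl⟩

namespace Grid

variable {κ R : Type*} [DecidableEq κ] [CommRing R] [DecidableEq R]
  {x : κ → R} {B : Finset (Finset κ)} {C : Finset (Finset R)}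

def line (x : κ → R) (a b : R) : κ ↪ κ × R :=
  ⟨fun i => (i, a * x i + b), fun _ _ h => (Prod.ext_iff.1 h).1⟩

def block (x : κ → R) (B : Finset (Finset κ)) (C : Finset (Finset R)) :
    (R × R) ⊕ κ → Finset (Finset (κ × R))
  | .inl (a, b) => B.map (mapEmbedding (line x a b)).toEmbedding
  | .inr c => C.map (mapEmbedding (Function.Embedding.sectR c R)).toEmbedding

theorem isLinearLaminar_block (hB : IsLinearLaminar B) (hC : IsLinearLaminar C)
    (i : (R × R) ⊕ κ) : IsLinearLaminar (block x B C i) := by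
  rcases i with ⟨a, b⟩ | c
  exacts [hB.map _, hC.map _]

variable [Fintype κ] [Fintype R]

def carrier (x : κ → R) : (R × R) ⊕ κ → Finset (κ × R)
  | .inl (a, b) => {p | p.2 = a * x p.1 + b}
  | .inr c => {p | p.1 = c}

def family (x : κ → R) (B : Finset (Finset κ)) (C : Finset (Finset R)) :
    Finset (Finset (κ × R)) :=
  univ.biUnion (block x B C)

theorem subset_carrier (i : (R × R) ⊕ κ) : ∀ A ∈ block x B C i, A ⊆ carrier x i := by
  rcases i with ⟨a, b⟩ | c <;>
  · simp only [block, carrier, mem_map, RelEmbedding.coe_toEmbedding, mapEmbedding_apply]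
    rintro _ ⟨S, -, rfl⟩ _ hp
    obtain ⟨k, -, rfl⟩ := mem_map.1 hp
    exact mem_filter.2 ⟨mem_univ _, rfl⟩

theorem card_inter_carrier_le_one (hx : Pairwise fun i j => IsUnit (x i - x j))
    {i j : (R × R) ⊕ κ} (hij : i ≠ j) : #(carrier x i ∩ carrier x j) ≤ 1 := by
  refine card_le_one.2 fun p hp q hq => ?_
  rcases i with ⟨a, b⟩ | c <;> rcases j with ⟨a', b'⟩ | c' <;>
    simp only [carrier, mem_inter, mem_filter, mem_univ, true_and] at hp hq
  · by_cases hpq : p.1 = q.1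
    · exact Prod.ext hpq (by rw [hp.1, hq.1, hpq])
    · have hdiff : (a - a') * (x p.1 - x q.1) = 0 := by
        linear_combination hp.1.symm.trans hp.2 - hq.1.symm.trans hq.2
      have ha : a = a' := sub_eq_zero.1 ((hx hpq).mul_left_eq_zero.1 hdiff)
      subst ha
      exact absurd (by rw [add_left_cancel (hp.1.symm.trans hp.2)]) hij
  · exact Prod.ext (hp.2.trans hq.2.symm) (by rw [hp.1, hq.1, hp.2, hq.2])
  · exact Prod.ext (hp.1.trans hq.1.symm) (by rw [hp.2, hq.2, hp.1, hq.1])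
  · exact absurd (by rw [← hp.1, ← hp.2]) hij

theorem isLinearLaminar_family (hx : Pairwise fun i j => IsUnit (x i - x j))
    (hB : IsLinearLaminar B) (hC : IsLinearLaminar C) : IsLinearLaminar (family x B C) where
  laminar := IsLaminar.biUnion (fun i _ => (isLinearLaminar_block hB hC i).laminar)
    (fun i _ => subset_carrier i) fun _ _ _ _ hij =>
      (card_inter_carrier_le_one hx hij).trans_lt one_lt_two
  three_le_card A hA := by
    obtain ⟨i, -, hA⟩ := mem_biUnion.1 hA
    exact (isLinearLaminar_block hB hC i).three_le_card A hA

theorem card_family (hx : Pairwise fun i j => IsUnit (x i - x j))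
    (hB : IsLinearLaminar B) (hC : IsLinearLaminar C) :
    #(family x B C) = Fintype.card R * Fintype.card R * #B + Fintype.card κ * #C := by
  rw [family, card_biUnion_of_card_inter_lt (t := 2)
    (fun i _ A hA => ((isLinearLaminar_block hB hC i).three_le_card A hA).trans' (by norm_num))
    (fun i _ => subset_carrier i) fun _ _ _ _ hij =>
      (card_inter_carrier_le_one hx hij).trans_lt one_lt_two]
  simp [Fintype.sum_sum_type, block, Fintype.card_prod]

theorem univ_notMem_family (hκ : 2 ≤ Fintype.card κ) (hR : 2 ≤ Fintype.card R) :
    univ ∉ family x B C := fun h => by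
  obtain ⟨⟨a, b⟩ | c, -, h⟩ := mem_biUnion.1 h <;>
  · simp only [block, mem_map, RelEmbedding.coe_toEmbedding, mapEmbedding_apply] at h
    obtain ⟨S, -, hS⟩ := h
    have := congrArg card hS
    rw [card_map, card_univ, Fintype.card_prod] at this
    nlinarith [card_le_univ S]

end Grid

def fanoPlane : Finset (Finset (ZMod 7)) := univ.image fun i => {i, i + 1, i + 3}

theorem isLinearLaminar_insert_univ_fanoPlane : IsLinearLaminar (insert univ fanoPlane) :=
  ⟨by unfold IsLaminar; decide +kernel, by decide +kernel⟩

theorem card_insert_univ_fanoPlane : #(insert univ fanoPlane) = 8 := by decide +kernel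

theorem exists_isLinearLaminar_card_eq_449 :
    ∃ B : Finset (Finset (Fin 49)), IsLinearLaminar B ∧ #B = 449 := by
  have : Fact (Nat.Prime 7) := ⟨by norm_num⟩
  set B₇ := insert univ fanoPlane
  have hx : Pairwise fun i j : ZMod 7 => IsUnit (id i - id j) := fun i j hij =>
    (sub_ne_zero.2 hij).isUnit
  set G := Grid.family id B₇ B₇
  have hG : IsLinearLaminar G :=
    Grid.isLinearLaminar_family hx isLinearLaminar_insert_univ_fanoPlane
      isLinearLaminar_insert_univ_fanoPlane
  have hcard : #G = 448 := by
    rw [Grid.card_family hx isLinearLaminar_insert_univ_fanoPlane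
      isLinearLaminar_insert_univ_fanoPlane, card_insert_univ_fanoPlane, ZMod.card]
  have huniv : univ ∉ G := Grid.univ_notMem_family (by simp) (by simp)
  let e : ZMod 7 × ZMod 7 ≃ Fin 49 := Fintype.equivFinOfCardEq (by simp)
  refine ⟨(insert univ G).map (mapEmbedding e.toEmbedding).toEmbedding,
    (hG.insert_univ (by simp)).map _, ?_⟩
  rw [card_map, card_insert_of_notMem huniv, hcard]

theorem pairwise_isUnit_natCast_sub {k h : ℕ} (hh : h.Coprime k.factorial) :
    Pairwise fun i j : Fin (k + 1) => IsUnit (((i : ℕ) : ZMod h) - ((j : ℕ) : ZMod h)) := by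
  have hunit : ∀ d : ℕ, 0 < d → d ≤ k → IsUnit (d : ZMod h) := fun d hd hdk =>
    (ZMod.isUnit_iff_coprime d h).2
      (Nat.Coprime.coprime_dvd_left (Nat.dvd_factorial hd hdk) hh.symm)
  have hlt : ∀ i j : Fin (k + 1), j < i → IsUnit (((i : ℕ) : ZMod h) - ((j : ℕ) : ZMod h)) :=
    fun i j hji => by
      rw [← Nat.cast_sub hji.le]
      exact hunit _ (Nat.sub_pos_of_lt hji) (by omega)
  intro i j hij
  rcases hij.lt_or_gt with hij | hji
  · simpa using (hlt j i hij).neg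
  · exact hlt i j hji

theorem Nat.exists_coprime_le_lt_add (M m : ℕ) (hM : 0 < M) (hm : 0 < m) :
    ∃ h, h.Coprime M ∧ h ≤ m ∧ m < h + M := by
  refine ⟨(m - 1) / M * M + 1,
    (Nat.coprime_mul_right_add_left 1 M _).2 (Nat.coprime_one_left M), ?_, ?_⟩
  · have := Nat.div_mul_le_self (m - 1) M
    omega
  · have := Nat.lt_div_mul_add (a := m - 1) hM
    omega

theorem exists_isLinearLaminar_card_eq_of_coprime {h n : ℕ} (hh : h.Coprime (Nat.factorial 48))
    (hn : 49 * h ≤ n) {C : Finset (Finset (Fin h))} (hC : IsLinearLaminar C) :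
    ∃ G : Finset (Finset (Fin n)), IsLinearLaminar G ∧ #G = 449 * h ^ 2 + 49 * #C := by
  have : NeZero h := ⟨by rintro rfl; simp [Nat.factorial_eq_one] at hh⟩
  obtain ⟨B, hB, hBcard⟩ := exists_isLinearLaminar_card_eq_449
  have hx := pairwise_isUnit_natCast_sub (k := 48) hh
  have hC' := hC.map (ZMod.finEquiv h).toEquiv.toEmbedding
  obtain ⟨e⟩ : Nonempty (Fin 49 × ZMod h ↪ Fin n) :=
    Function.Embedding.nonempty_of_card_le (by simpa [ZMod.card] using hn)
  refine ⟨_, (Grid.isLinearLaminar_family hx hB hC').map e, ?_⟩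
  rw [card_map, Grid.card_family hx hB hC', card_map, hBcard, ZMod.card, Fintype.card_fin]
  ring

theorem sq_le_mul_sqrt_of_lt (n : ℕ) (hn : n < 10 ^ 128) :
    449 * n ^ 2 ≤ 10 ^ 68 * (n * n.sqrt) := by
  set s := n.sqrt
  have hs : s < 10 ^ 64 := Nat.sqrt_lt'.2 (by norm_num; omega)
  have hns : n ≤ 3 * s * s := by
    have := Nat.sqrt_le_add n
    rcases Nat.eq_zero_or_pos n with rfl | hn0
    · simp
    · have : 0 < s := Nat.sqrt_pos.2 hn0
      nlinarith
  nlinarith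

theorem sq_le_mul_sqrt_step (h r a : ℕ) (hr : r ≤ 10 ^ 64) (hh : 10 ^ 126 ≤ h)
    (ha : 449 * h ^ 2 ≤ 2352 * a + 10 ^ 68 * (h * h.sqrt)) :
    449 * (49 * h + r) ^ 2 ≤
      2352 * (449 * h ^ 2 + 49 * a) + 10 ^ 68 * ((49 * h + r) * (49 * h + r).sqrt) := by
  set s := h.sqrt
  have hs : 10 ^ 63 ≤ s := Nat.le_sqrt.2 (by norm_num; omega)
  have hN : 7 * s ≤ (49 * h + r).sqrt := Nat.le_sqrt.2 (by nlinarith [Nat.sqrt_le h])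
  have hlin : 44002 * (h * r) ≤ 10 ^ 69 * (h * s) := by nlinarith
  have hsq : 449 * r ^ 2 ≤ 10 ^ 4 * (h * s) := by nlinarith
  nlinarith

theorem exists_isLinearLaminar_sq_le (n : ℕ) : ∃ G : Finset (Finset (Fin n)),
    IsLinearLaminar G ∧ 449 * n ^ 2 ≤ 2352 * #G + 10 ^ 68 * (n * n.sqrt) := by
  induction n using Nat.strong_induction_on with
  | _ n ih =>
  by_cases hn : n < 10 ^ 128
  · exact ⟨∅, ⟨by simp [IsLaminar], by simp⟩, by simpa using sq_le_mul_sqrt_of_lt n hn⟩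
  -- `n = 49 * h + r` with `r < 49 * 48! < 10 ^ 64`
  have hM : Nat.factorial 48 ≤ 10 ^ 62 := by norm_num [Nat.factorial]
  obtain ⟨h, hcop, hle, hlt⟩ :=
    Nat.exists_coprime_le_lt_add (Nat.factorial 48) (n / 49) (Nat.factorial_pos _) (by omega)
  obtain ⟨C, hC, hCcard⟩ := ih h (by omega)
  obtain ⟨G, hG, hGcard⟩ :=
    exists_isLinearLaminar_card_eq_of_coprime (n := n) hcop (by omega) hC
  obtain ⟨r, rfl⟩ : ∃ r, n = 49 * h + r := ⟨n - 49 * h, by omega⟩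
  exact ⟨G, hG, hGcard ▸ sq_le_mul_sqrt_step h r #C (by omega) (by omega) hCcard⟩

theorem mul_choose_two_le_f {n : ℕ} (hn : 10 ^ 142 ≤ n) : 13818 * n.choose 2 ≤ 10000 * f n := by
  obtain ⟨G, hG, hGcard⟩ := exists_isLinearLaminar_sq_le n
  have hf := hG.choose_two_add_card_le_f
  have hchoose : 2 * n.choose 2 + n = n ^ 2 := by
    rw [Nat.choose_two_right, Nat.mul_div_cancel' n.even_mul_pred_self.two_dvd]
    rcases n with _ | n
    · rfl
    · rw [Nat.add_sub_cancel]; ring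
  have hs : 10 ^ 71 ≤ n.sqrt := Nat.le_sqrt.2 (by norm_num; omega)
  nlinarith [Nat.sqrt_le n]

theorem f_div_choose_two_le_two (n : ℕ) : (f n : ℝ) / n.choose 2 ≤ 2 :=
  div_le_of_le_mul₀ (Nat.cast_nonneg _) zero_le_two (by exact_mod_cast f_le_two_mul_choose n)

/-- liminf of f(n)/C(n,2) is at least 1.3818. -/
theorem liminf_f_ge :
    (1.3818 : ℝ) ≤ Filter.liminf (fun n : ℕ => (f n : ℝ) / (n.choose 2 : ℝ)) Filter.atTop := by
  refine Filter.le_liminf_of_le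
    (Filter.isCoboundedUnder_ge_of_le _ f_div_choose_two_le_two) ?_
  filter_upwards [Filter.eventually_ge_atTop (10 ^ 142)] with n hn
  have hpos : (0 : ℝ) < n.choose 2 := by exact_mod_cast Nat.choose_pos (by omega)
  have hf : (13818 : ℝ) * n.choose 2 ≤ 10000 * f n := by exact_mod_cast mul_choose_two_le_f hn
  rw [le_div_iff₀ hpos]
  linarith
end

section
/- For every prime power q there exists a 3-(q²+1, q+1, 1) design, i.e., a family of (q+1)-element subsets (blocks) of a (q²+1)-element point set such that every 3-element subset of points is contained in exactly one block. -/
/-!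
Take fields `k ⊆ K` with `|k| = q` and `|K| = q²`. The points are the `q² + 1` points of the
projective line `ℙ¹(K)`, and the blocks are the images under `GL₂(K)` of the subline `ℙ¹(k)`,
which has `q + 1` points. Since `GL₂(K)` is 3-transitive on `ℙ¹(K)`, any three points lie on a
block. For uniqueness it suffices to show that if `g • ℙ¹(k)` meets `ℙ¹(k)` in three points then
`g • ℙ¹(k) = ℙ¹(k)`: by 3-transitivity of `GL₂(k)` on `ℙ¹(k)`, `g` agrees on the frame
`∞, 0, 1` with some `h ∈ GL₂(k)`, and an element of `GL₂(K)` fixing the frame is scalar, so `g`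
acts on `ℙ¹(K)` as `h`, which preserves `ℙ¹(k)`.
-/

open Pointwise Projectivization Matrix
open scoped LinearAlgebra.Projectivization

def IsSteinerSystem {X : Type*} (t k : ℕ) (B : Finset (Finset X)) : Prop :=
  (∀ K ∈ B, K.card = k) ∧ ∀ T : Finset X, T.card = t → ∃! K, K ∈ B ∧ T ⊆ K

theorem IsSteinerSystem.map {X Y : Type*} {t k : ℕ} {B : Finset (Finset X)}
    (hB : IsSteinerSystem t k B) (e : X ≃ Y) :
    IsSteinerSystem t k (B.map e.finsetCongr.toEmbedding) := by
  obtain ⟨hcard, hunique⟩ := hB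
  have symm_subset_iff {T K : Finset Y} :
      e.finsetCongr.symm T ⊆ e.finsetCongr.symm K ↔ T ⊆ K := Finset.map_subset_map
  refine ⟨fun K' hK' => ?_, fun T hT => ?_⟩
  · obtain ⟨K, hK, rfl⟩ := Finset.mem_map.mp hK'
    simpa using hcard K hK
  obtain ⟨K, ⟨hK, hTK⟩, hK_unique⟩ := hunique (e.finsetCongr.symm T) (by simpa using hT)
  refine ⟨e.finsetCongr K, ⟨?_, ?_⟩, ?_⟩
  · exact Finset.mem_map_of_mem _ hK
  · rwa [← symm_subset_iff, Equiv.symm_apply_apply]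
  · rintro K' ⟨hK', hTK'⟩
    rw [Finset.mem_map_equiv] at hK'
    rw [← e.finsetCongr.apply_symm_apply K', hK_unique _ ⟨hK', symm_subset_iff.mpr hTK'⟩]

theorem isSteinerSystem_orbit {G X : Type*} [Group G] [MulAction G X] [DecidableEq X]
    [Finite G] (t : ℕ) (S : Finset X)
    (cover : ∀ T : Finset X, T.card = t → ∃ g : G, T ⊆ g • S)
    (rigid : ∀ (g : G) (T : Finset X), T.card = t → T ⊆ S → T ⊆ g • S → g • S = S) :
    IsSteinerSystem t S.card (Set.finite_range fun g : G => g • S).toFinset := by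
  refine ⟨by simp, fun T hT => ?_⟩
  obtain ⟨g, hg⟩ := cover T hT
  refine ⟨g • S, ⟨by simp, hg⟩, ?_⟩
  rintro _ ⟨hK, hTK⟩
  obtain ⟨g', rfl⟩ := by simpa using hK
  have h := rigid (g⁻¹ * g') (g⁻¹ • T) (by rw [Finset.card_smul_finset, hT])
    (Finset.subset_smul_finset_iff.mp hg)
    (by rwa [mul_smul, Finset.smul_finset_subset_smul_finset_iff])
  rw [← mul_inv_cancel_left g g', mul_smul, h]

namespace ProjectiveLine

variable {F : Type*} [Field F]

-- The frame `∞ = [1 : 0]`, `0 = [0 : 1]`, `1 = [1 : 1]` in the affine coordinate `[x : y] ↦ x / y`.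
variable (F) in
def infty : ℙ F (Fin 2 → F) := mk F (Pi.single 0 1) (by simp)

variable (F) in
def zero : ℙ F (Fin 2 → F) := mk F (Pi.single 1 1) (by simp)

variable (F) in
def one : ℙ F (Fin 2 → F) := mk F (Pi.single 0 1 + Pi.single 1 1) fun h => by
  simpa using congrFun h 0

def pairMatrix (u v : Fin 2 → F) : Matrix (Fin 2) (Fin 2) F := Matrix.of fun i j => ![u, v] j i

theorem pairMatrix_mulVec (u v c : Fin 2 → F) :
    pairMatrix u v *ᵥ c = c 0 • u + c 1 • v := by
  ext i
  simp [pairMatrix, mulVec, dotProduct, Fin.sum_univ_two, mul_comm]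

theorem isUnit_pairMatrix {u v : Fin 2 → F} (huv : LinearIndependent F ![u, v]) :
    IsUnit (pairMatrix u v) :=
  linearIndependent_cols_iff_isUnit.mp huv

theorem exists_smul_frame_eq {x y z : ℙ F (Fin 2 → F)} (hxy : x ≠ y) (hxz : x ≠ z)
    (hyz : y ≠ z) :
    ∃ g : GL (Fin 2) F, g • infty F = x ∧ g • zero F = y ∧ g • one F = z := by
  have hli : LinearIndependent F ![x.rep, y.rep] := linearIndependent_pair_iff_ne.mpr hxy
  obtain ⟨c, hz⟩ : ∃ c : Fin 2 → F, c 0 • x.rep + c 1 • y.rep = z.rep := by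
    set g := (isUnit_pairMatrix hli).unit
    refine ⟨(↑g⁻¹ : Matrix (Fin 2) (Fin 2) F) *ᵥ z.rep, ?_⟩
    rw [← pairMatrix_mulVec, mulVec_mulVec]
    exact (congrArg (· *ᵥ z.rep) g.mul_inv).trans (one_mulVec _)
  have hc0 : c 0 ≠ 0 := fun h0 => hyz <| by
    rw [← mk_rep y, ← mk_rep z, eq_comm, mk_eq_mk_iff']
    exact ⟨c 1, by simpa [h0] using hz⟩
  have hc1 : c 1 ≠ 0 := fun h1 => hxz <| by
    rw [← mk_rep x, ← mk_rep z, eq_comm, mk_eq_mk_iff']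
    exact ⟨c 0, by simpa [h1] using hz⟩
  have hli' : LinearIndependent F ![c 0 • x.rep, c 1 • y.rep] := by
    rw [LinearIndependent.pair_iff] at hli ⊢
    intro s t hst
    simpa [hc0, hc1] using hli (s * c 0) (t * c 1) (by simpa [mul_smul] using hst)
  set g := (isUnit_pairMatrix hli').unit
  have hg (v : Fin 2 → F) : g • v = v 0 • c 0 • x.rep + v 1 • c 1 • y.rep :=
    pairMatrix_mulVec _ _ v
  refine ⟨g, ?_, ?_, ?_⟩
  · conv_rhs => rw [← mk_rep x]
    rw [infty, smul_mk, mk_eq_mk_iff']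
    exact ⟨c 0, by simp [hg]⟩
  · conv_rhs => rw [← mk_rep y]
    rw [zero, smul_mk, mk_eq_mk_iff']
    exact ⟨c 1, by simp [hg]⟩
  · conv_rhs => rw [← mk_rep z]
    rw [one, smul_mk, mk_eq_mk_iff']
    exact ⟨1, by simp [hg, hz]⟩

theorem smul_eq_self_of_fixes_frame {g : GL (Fin 2) F} (hinfty : g • infty F = infty F)
    (hzero : g • zero F = zero F) (hone : g • one F = one F) (p : ℙ F (Fin 2 → F)) :
    g • p = p := by
  rw [infty, smul_mk, mk_eq_mk_iff'] at hinfty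
  rw [zero, smul_mk, mk_eq_mk_iff'] at hzero
  rw [one, smul_mk, mk_eq_mk_iff'] at hone
  obtain ⟨a, ha⟩ := hinfty
  obtain ⟨b, hb⟩ := hzero
  obtain ⟨c, hc⟩ := hone
  rw [smul_add g, ← ha, ← hb] at hc
  have hca : c = a := by simpa using congrFun hc 0
  have hcb : c = b := by simpa using congrFun hc 1
  have hg (v : Fin 2 → F) : g • v = a • v := by
    have hv : v = v 0 • Pi.single 0 1 + v 1 • Pi.single 1 1 := by
      ext i; fin_cases i <;> simp
    rw [hv, smul_add, smul_comm g, smul_comm g, ← ha, ← hb, ← hca, hcb, smul_add, smul_comm b,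
      smul_comm b]
  induction p using Projectivization.ind with
  | h v hv => rw [smul_mk, mk_eq_mk_iff']; exact ⟨a, (hg v).symm⟩

theorem smul_eq_smul_of_eq_on_frame {g h : GL (Fin 2) F}
    (hinfty : g • infty F = h • infty F) (hzero : g • zero F = h • zero F)
    (hone : g • one F = h • one F) (p : ℙ F (Fin 2 → F)) :
    g • p = h • p := by
  have fixes {q : ℙ F (Fin 2 → F)} (hq : g • q = h • q) : (h⁻¹ * g) • q = q := by
    rw [mul_smul, hq, inv_smul_smul]
  calc g • p = h • (h⁻¹ * g) • p := by rw [smul_smul, mul_inv_cancel_left]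
    _ = h • p := by rw [smul_eq_self_of_fixes_frame (fixes hinfty) (fixes hzero) (fixes hone)]

section Subline

variable {k K : Type*} [Field k] [Field K] (σ : k →+* K)

def baseChange : (Fin 2 → k) →ₛₗ[σ] (Fin 2 → K) where
  toFun v := σ ∘ v
  map_add' u v := by ext; simp
  map_smul' a v := by ext; simp

theorem baseChange_injective : Function.Injective (baseChange σ) :=
  σ.injective.comp_left

theorem baseChange_single (i : Fin 2) : baseChange σ (Pi.single i 1) = Pi.single i 1 := by
  ext j
  simp [baseChange, Pi.single_apply, apply_ite σ]

def sublineMap : ℙ k (Fin 2 → k) → ℙ K (Fin 2 → K) :=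
  Projectivization.map (baseChange σ) (baseChange_injective σ)

theorem sublineMap_injective : Function.Injective (sublineMap σ) := by
  intro p p' h
  induction p using Projectivization.ind with | h u hu =>
  induction p' using Projectivization.ind with | h v hv =>
  rw [sublineMap, map_mk, map_mk, mk_eq_mk_iff'] at h
  obtain ⟨c, hc⟩ := h
  obtain ⟨i, hi⟩ : ∃ i, v i ≠ 0 := Function.ne_iff.mp hv
  have hc_eq : c = σ (u i / v i) := by
    have hci := congrFun hc i
    simp only [baseChange, LinearMap.coe_mk, AddHom.coe_mk, Pi.smul_apply, Function.comp_apply,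
      smul_eq_mul] at hci
    rw [map_div₀, ← hci, mul_div_cancel_right₀ _ ((map_ne_zero σ).mpr hi)]
  rw [mk_eq_mk_iff']
  refine ⟨u i / v i, baseChange_injective σ ?_⟩
  rw [map_smulₛₗ, ← hc_eq, hc]

theorem sublineMap_smul (g : GL (Fin 2) k) (p : ℙ k (Fin 2 → k)) :
    sublineMap σ (g • p) = GeneralLinearGroup.map σ g • sublineMap σ p := by
  induction p using Projectivization.ind with | h v hv =>
  rw [smul_mk, sublineMap, map_mk, map_mk, smul_mk]
  congr 1
  ext i
  exact σ.map_mulVec (g : Matrix (Fin 2) (Fin 2) k) v i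

theorem sublineMap_infty : sublineMap σ (infty k) = infty K := by
  rw [infty, sublineMap, map_mk, infty]
  congr 1
  exact baseChange_single σ 0

theorem sublineMap_zero : sublineMap σ (zero k) = zero K := by
  rw [zero, sublineMap, map_mk, zero]
  congr 1
  exact baseChange_single σ 1

theorem sublineMap_one : sublineMap σ (one k) = one K := by
  rw [one, sublineMap, map_mk, one]
  congr 1
  rw [map_add, baseChange_single, baseChange_single]

def subline : Set (ℙ K (Fin 2 → K)) := Set.range (sublineMap σ)

theorem map_smul_subline (g : GL (Fin 2) k) :
    GeneralLinearGroup.map σ g • subline σ = subline σ := by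
  rw [subline, Set.smul_set_range]
  simp_rw [← sublineMap_smul]
  exact (MulAction.surjective g).range_comp (sublineMap σ)

theorem exists_map_smul_frame_eq {x y z : ℙ K (Fin 2 → K)} (hxy : x ≠ y) (hxz : x ≠ z)
    (hyz : y ≠ z) (hx : x ∈ subline σ) (hy : y ∈ subline σ) (hz : z ∈ subline σ) :
    ∃ g : GL (Fin 2) k, GeneralLinearGroup.map σ g • infty K = x ∧
      GeneralLinearGroup.map σ g • zero K = y ∧ GeneralLinearGroup.map σ g • one K = z := by
  obtain ⟨x, rfl⟩ := hx
  obtain ⟨y, rfl⟩ := hy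
  obtain ⟨z, rfl⟩ := hz
  obtain ⟨g, hgx, hgy, hgz⟩ := exists_smul_frame_eq (ne_of_apply_ne _ hxy)
    (ne_of_apply_ne _ hxz) (ne_of_apply_ne _ hyz)
  refine ⟨g, ?_, ?_, ?_⟩
  · rw [← sublineMap_infty σ, ← sublineMap_smul, hgx]
  · rw [← sublineMap_zero σ, ← sublineMap_smul, hgy]
  · rw [← sublineMap_one σ, ← sublineMap_smul, hgz]

theorem smul_subline_eq_of_three_mem {g : GL (Fin 2) K} {x y z : ℙ K (Fin 2 → K)}
    (hxy : x ≠ y) (hxz : x ≠ z) (hyz : y ≠ z)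
    (hx : x ∈ subline σ) (hy : y ∈ subline σ) (hz : z ∈ subline σ)
    (hx' : x ∈ g • subline σ) (hy' : y ∈ g • subline σ) (hz' : z ∈ g • subline σ) :
    g • subline σ = subline σ := by
  rw [Set.mem_smul_set_iff_inv_smul_mem] at hx' hy' hz'
  have hinj := MulAction.injective (α := GL (Fin 2) K) (β := ℙ K (Fin 2 → K)) g⁻¹
  obtain ⟨a, hax, hay, haz⟩ := exists_map_smul_frame_eq σ hxy hxz hyz hx hy hz
  obtain ⟨b, hbx, hby, hbz⟩ := exists_map_smul_frame_eq σ (hinj.ne hxy) (hinj.ne hxz)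
    (hinj.ne hyz) hx' hy' hz'
  have hagree (p : ℙ K (Fin 2 → K)) :
      (g * GeneralLinearGroup.map σ b) • p = GeneralLinearGroup.map σ a • p := by
    apply smul_eq_smul_of_eq_on_frame
    · rw [mul_smul, hbx, smul_inv_smul, hax]
    · rw [mul_smul, hby, smul_inv_smul, hay]
    · rw [mul_smul, hbz, smul_inv_smul, haz]
  calc g • subline σ = (g * GeneralLinearGroup.map σ b) • subline σ := by
        rw [mul_smul, map_smul_subline]
    _ = GeneralLinearGroup.map σ a • subline σ := by
        simp_rw [← Set.image_smul, hagree]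
    _ = subline σ := map_smul_subline σ a

theorem ncard_subline [Finite k] : (subline σ).ncard = Nat.card k + 1 := by
  rw [subline, Set.ncard_range_of_injective (sublineMap_injective σ),
    card_of_finrank_two k _ (Module.finrank_fin_fun k)]

theorem infty_mem_subline : infty K ∈ subline σ := ⟨infty k, sublineMap_infty σ⟩

theorem zero_mem_subline : zero K ∈ subline σ := ⟨zero k, sublineMap_zero σ⟩

theorem one_mem_subline : one K ∈ subline σ := ⟨one k, sublineMap_one σ⟩

end Subline

theorem exists_isSteinerSystem_subline {k K : Type*} [Field k] [Field K] [Finite k] [Finite K]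
    (σ : k →+* K) :
    ∃ B : Finset (Finset (ℙ K (Fin 2 → K))), IsSteinerSystem 3 (Nat.card k + 1) B := by
  classical
  have hS := Set.toFinite (subline σ)
  have hcard : hS.toFinset.card = Nat.card k + 1 := by
    rw [← Set.ncard_eq_toFinset_card, ncard_subline]
  have coe_smul (g : GL (Fin 2) K) : (↑(g • hS.toFinset) : Set _) = g • subline σ := by
    rw [Finset.coe_smul_finset, hS.coe_toFinset]
  refine ⟨_, hcard ▸ isSteinerSystem_orbit (G := GL (Fin 2) K) 3 hS.toFinset ?_ ?_⟩
  · intro T hT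
    obtain ⟨x, y, z, hxy, hxz, hyz, rfl⟩ := Finset.card_eq_three.mp hT
    obtain ⟨g, rfl, rfl, rfl⟩ := exists_smul_frame_eq hxy hxz hyz
    refine ⟨g, ?_⟩
    simp only [Finset.insert_subset_iff, Finset.singleton_subset_iff,
      Finset.smul_mem_smul_finset_iff, Set.Finite.mem_toFinset]
    exact ⟨infty_mem_subline σ, zero_mem_subline σ, one_mem_subline σ⟩
  · intro g T hT hTS hTgS
    obtain ⟨x, y, z, hxy, hxz, hyz, rfl⟩ := Finset.card_eq_three.mp hT
    rw [← Finset.coe_subset, coe_smul] at hTgS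
    rw [← Finset.coe_subset, hS.coe_toFinset] at hTS
    simp only [Finset.coe_insert, Finset.coe_singleton, Set.insert_subset_iff,
      Set.singleton_subset_iff] at hTS hTgS
    rw [← Finset.coe_inj, coe_smul, hS.coe_toFinset]
    exact smul_subline_eq_of_three_mem σ hxy hxz hyz hTS.1 hTS.2.1 hTS.2.2 hTgS.1 hTgS.2.1
      hTgS.2.2

end ProjectiveLine

/-- For every prime power `q` there exists a 3-(q²+1, q+1, 1) design (circle geometry). -/
theorem exists_circle_geometry (q : ℕ) (hq : ∃ p e : ℕ, p.Prime ∧ 0 < e ∧ q = p ^ e) :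
    ∃ B : Finset (Finset (Fin (q ^ 2 + 1))),
      (∀ K ∈ B, K.card = q + 1) ∧
      ∀ T : Finset (Fin (q ^ 2 + 1)), T.card = 3 → ∃! K, K ∈ B ∧ T ⊆ K := by
  obtain ⟨p, e, hp, he, rfl⟩ := hq
  have := Fact.mk hp
  obtain ⟨σ⟩ : Nonempty (GaloisField p e →ₐ[ZMod p] GaloisField p (2 * e)) := by
    apply FiniteField.nonempty_algHom_of_finrank_dvd
    rw [GaloisField.finrank p he.ne', GaloisField.finrank p (by omega)]
    exact dvd_mul_left e 2
  obtain ⟨B, hB⟩ := ProjectiveLine.exists_isSteinerSystem_subline σ.toRingHom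
  rw [GaloisField.card p e he.ne'] at hB
  have hcard : Nat.card (ℙ (GaloisField p (2 * e)) (Fin 2 → GaloisField p (2 * e))) =
      (p ^ e) ^ 2 + 1 := by
    rw [card_of_finrank_two _ _ (Module.finrank_fin_fun _), GaloisField.card p _ (by omega),
      pow_mul']
  exact ⟨_, hB.map (Finite.equivFinOfCardEq hcard)⟩
end

section
/- Let B be a 2-wise packing on [n] and for each k let b_k be the number of blocks of B of cardinality k. Suppose m is the maximum cardinality of a block, i.e., b_m > 0 and b_k = 0 for m < k ≤ n. Then Σ_{2 ≤ k ≤ m} binom(k−1,2)·b_k ≤ binom(n−m,2) + binom(m−1,2). -/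
/-!
Fix a block `M` of maximal size `m`. Two blocks share at most one point, so every other block `K`
keeps at least `|K| - 1` points outside `M`, and the pairs they span there are pairwise distinct
pairs of the `n - m` points off `M`. Hence the blocks other than `M` contribute at most
`C(n - m, 2)`, and `M` itself contributes `C(m - 1, 2)`.
-/

open Finset

variable {α : Type*}

def IsPairPacking (B : Finset (Finset α)) : Prop :=
  ∀ T : Finset α, T.card = 2 → ∀ K ∈ B, ∀ K' ∈ B, T ⊆ K → T ⊆ K' → K = K'

namespace IsPairPacking

variable [DecidableEq α] {B : Finset (Finset α)}

theorem card_inter_le_one (hB : IsPairPacking B) {K K' : Finset α} (hK : K ∈ B) (hK' : K' ∈ B)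
    (hne : K ≠ K') : #(K ∩ K') ≤ 1 := by
  by_contra! h
  obtain ⟨T, hT, hT2⟩ := exists_subset_card_eq h
  exact hne (hB T hT2 K hK K' hK' (hT.trans inter_subset_left) (hT.trans inter_subset_right))

theorem card_sub_one_le_card_sdiff (hB : IsPairPacking B) {K M : Finset α} (hK : K ∈ B)
    (hM : M ∈ B) (hne : K ≠ M) : #K - 1 ≤ #(K \ M) := by
  have := card_sdiff_add_card_inter K M
  have := hB.card_inter_le_one hK hM hne
  omega

theorem sum_choose_card_inter_le (hB : IsPairPacking B) (S : Finset α) :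
    ∑ K ∈ B, (#(K ∩ S)).choose 2 ≤ (#S).choose 2 := by
  have hdisj : (B : Set (Finset α)).PairwiseDisjoint fun K => (K ∩ S).powersetCard 2 := by
    intro K hK K' hK' hne
    simp only [Function.onFun, disjoint_left, mem_powersetCard]
    intro T hT hT'
    exact hne (hB T hT.2 K hK K' hK' (hT.1.trans inter_subset_left)
      (hT'.1.trans inter_subset_left))
  calc ∑ K ∈ B, (#(K ∩ S)).choose 2
      = #(B.biUnion fun K => (K ∩ S).powersetCard 2) := by
        simp only [card_biUnion hdisj, card_powersetCard]
    _ ≤ #(S.powersetCard 2) :=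
        card_le_card <| biUnion_subset.mpr fun K _ =>
          powersetCard_mono inter_subset_right
    _ = (#S).choose 2 := card_powersetCard 2 S

end IsPairPacking

theorem sum_mul_card_filter_eq_sum {ι κ : Type*} [DecidableEq κ] {s : Finset ι} {t : Finset κ}
    {g : ι → κ} (h : ∀ i ∈ s, g i ∈ t) (f : κ → ℕ) :
    ∑ k ∈ t, f k * #{i ∈ s | g i = k} = ∑ i ∈ s, f (g i) := by
  rw [← sum_fiberwise_of_maps_to' h]
  simp only [sum_const, smul_eq_mul, mul_comm]

/-- For a 2-wise packing on `[n]` with maximum block size `m`,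
Σ_{2 ≤ k ≤ m} C(k−1,2)·b_k ≤ C(n−m,2) + C(m−1,2). -/
theorem packing_non_pair_count (n m : ℕ) (B : Finset (Finset (Fin n)))
    (hcard : ∀ K ∈ B, 2 ≤ K.card)
    (hpack : ∀ T : Finset (Fin n), T.card = 2 →
      ∀ K ∈ B, ∀ K' ∈ B, T ⊆ K → T ⊆ K' → K = K')
    (hm : 0 < (B.filter (fun K => K.card = m)).card)
    (hmax : ∀ k, m < k → k ≤ n → (B.filter (fun K => K.card = k)).card = 0) :
    ∑ k ∈ Finset.Icc 2 m, (k - 1).choose 2 * (B.filter (fun K => K.card = k)).card ≤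
      (n - m).choose 2 + (m - 1).choose 2 := by
  have hB : IsPairPacking B := hpack
  obtain ⟨M, hM⟩ := card_pos.mp hm
  obtain ⟨hMB, hMm⟩ := mem_filter.mp hM
  have hle : ∀ K ∈ B, #K ≤ m := fun K hK => by
    by_contra! h
    have hempty := hmax _ h (by simpa using card_le_univ K)
    rw [card_eq_zero, filter_eq_empty_iff] at hempty
    exact hempty hK rfl
  rw [sum_mul_card_filter_eq_sum fun K hK => mem_Icc.mpr ⟨hcard K hK, hle K hK⟩,
    ← add_sum_erase B _ hMB, hMm, add_comm]
  gcongr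
  calc ∑ K ∈ B.erase M, (#K - 1).choose 2
      ≤ ∑ K ∈ B.erase M, (#(K ∩ Mᶜ)).choose 2 := sum_le_sum fun K hK => by
        rw [← sdiff_eq_inter_compl]
        exact Nat.choose_le_choose 2
          (hB.card_sub_one_le_card_sdiff (mem_of_mem_erase hK) hMB (ne_of_mem_erase hK))
    _ ≤ ∑ K ∈ B, (#(K ∩ Mᶜ)).choose 2 := sum_le_sum_of_subset (erase_subset M B)
    _ ≤ (#Mᶜ).choose 2 := hB.sum_choose_card_inter_le Mᶜ
    _ = (n - m).choose 2 := by rw [card_compl, Fintype.card_fin, hMm]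
end

section
/- For every positive integer t there exists a constant C_t such that for every positive integer n, every t-laminar family of subsets of [n] has at most C_t·n^t members. -/
/-!
Only the members of size at least `t` need an argument; call them `G`. Two members of `G`
sharing `t` points are nested, so `G` behaves like a forest. A member `A` that is not the union
of the members strictly inside it contains a point `x` lying in none of them, and any `t`-subset
of `A` through `x` determines `A`; so these members are at most `n.choose t`. Every other member
`A` is a branching node, and we send it to the chosen leaf of a child of `A` avoiding the chosen
leaf of `A`. With leaves chosen coherently (the first one in a fixed well-order) this map is
injective, so the branching members are at most as many as the leaves, which are of the first kind.
-/

open Finset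

variable {α : Type*}

def IsCoveredBelow (G : Finset (Finset α)) (A : Finset α) : Prop :=
  ∀ x ∈ A, ∃ B ∈ G, B ⊂ A ∧ x ∈ B

structure IsLeafChoice (G : Finset (Finset α)) (m : Finset α → Finset α) : Prop where
  minimal : ∀ X ∈ G, Minimal (· ∈ G) (m X)
  subset : ∀ X ∈ G, m X ⊆ X
  eq_of_subset : ∀ X ∈ G, ∀ Y ⊆ X, m X ⊆ Y → m Y = m X

lemma exists_isLeafChoice (G : Finset (Finset α)) : ∃ m, IsLeafChoice G m := by
  have hfirst : ∀ X, ∃ L, {L | Minimal (· ∈ G) L ∧ L ⊆ X}.Nonempty →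
      (Minimal (· ∈ G) L ∧ L ⊆ X) ∧
        ∀ L', Minimal (· ∈ G) L' → L' ⊆ X → ¬ WellOrderingRel L' L := by
    intro X
    by_cases hX : {L | Minimal (· ∈ G) L ∧ L ⊆ X}.Nonempty
    · obtain ⟨L, hL, hLmin⟩ := WellOrderingRel.isWellOrder.wf.has_min _ hX
      exact ⟨L, fun _ => ⟨hL, fun L' h₁ h₂ => hLmin L' ⟨h₁, h₂⟩⟩⟩
    · exact ⟨∅, fun h => absurd h hX⟩
  choose m hm using hfirst
  have hleaf : ∀ X ∈ G, {L | Minimal (· ∈ G) L ∧ L ⊆ X}.Nonempty := fun X hX => by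
    obtain ⟨L, hLX, hL⟩ := G.exists_le_minimal hX
    exact ⟨L, hL, hLX⟩
  refine ⟨m, fun X hX => ((hm X (hleaf X hX)).1).1, fun X hX => ((hm X (hleaf X hX)).1).2, ?_⟩
  intro X hX Y hYX hXY
  obtain ⟨⟨hXmin, -⟩, hXfirst⟩ := hm X (hleaf X hX)
  obtain ⟨⟨hYmin, hYsub⟩, hYfirst⟩ := hm Y ⟨m X, hXmin, hXY⟩
  rcases trichotomous_of WellOrderingRel (m Y) (m X) with h | h | h
  · exact absurd h (hXfirst _ hYmin (hYsub.trans hYX))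
  · exact h
  · exact absurd h (hYfirst _ hXmin hXY)

lemma not_isCoveredBelow_of_minimal {G : Finset (Finset α)} {L : Finset α}
    (hL : Minimal (· ∈ G) L) (hne : L.Nonempty) : ¬ IsCoveredBelow G L := fun hcov => by
  obtain ⟨x, hx⟩ := hne
  obtain ⟨B, hB, hBL, -⟩ := hcov x hx
  exact hBL.ne (hL.eq_of_le hB hBL.subset)

lemma exists_subset_card_eq_not_subset_of_not_isCoveredBelow {G : Finset (Finset α)}
    {A : Finset α} {t : ℕ} (hA : ¬ IsCoveredBelow G A) (ht : 0 < t) (htA : t ≤ #A) :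
    ∃ S ⊆ A, #S = t ∧ ∀ B ∈ G, B ⊂ A → ¬ S ⊆ B := by
  simp only [IsCoveredBelow, not_forall, not_exists, not_and] at hA
  obtain ⟨x, hxA, hx⟩ := hA
  obtain ⟨S, hxS, hSA, hS⟩ :=
    exists_subsuperset_card_eq (singleton_subset_iff.2 hxA) (by rw [card_singleton]; exact ht) htA
  exact ⟨S, hSA, hS, fun B hB hBA hSB => hx B hB hBA (hSB (hxS (mem_singleton_self x)))⟩

variable [DecidableEq α]

instance (G : Finset (Finset α)) : DecidablePred (IsCoveredBelow G) :=
  fun _ => by unfold IsCoveredBelow; infer_instance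

def IsTLaminar (t : ℕ) (F : Finset (Finset α)) : Prop :=
  ∀ A ∈ F, ∀ B ∈ F, t ≤ #(A ∩ B) → A ⊆ B ∨ B ⊆ A

namespace IsTLaminar

variable {t : ℕ} {F G : Finset (Finset α)}

lemma mono (hF : IsTLaminar t F) (hGF : G ⊆ F) : IsTLaminar t G :=
  fun A hA B hB => hF A (hGF hA) B (hGF hB)

lemma subset_or_subset_of_subset (hG : IsTLaminar t G) {A B S : Finset α} (hA : A ∈ G)
    (hB : B ∈ G) (hSA : S ⊆ A) (hSB : S ⊆ B) (hS : t ≤ #S) : A ⊆ B ∨ B ⊆ A :=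
  hG A hA B hB (hS.trans (card_le_card (subset_inter hSA hSB)))

lemma eq_of_maximal {s : Finset (Finset α)} (hG : IsTLaminar t G) (hsG : s ⊆ G)
    {D D' S : Finset α} (hD : Maximal (· ∈ s) D) (hD' : Maximal (· ∈ s) D') (hSD : S ⊆ D)
    (hSD' : S ⊆ D') (hS : t ≤ #S) : D = D' := by
  rcases hG.subset_or_subset_of_subset (hsG hD.1) (hsG hD'.1) hSD hSD' hS with h | h
  · exact hD.eq_of_le hD'.1 h
  · exact (hD'.eq_of_le hD.1 h).symm

lemma eq_of_subset_of_forall_not_subset (hG : IsTLaminar t G) {A B S : Finset α} (hA : A ∈ G)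
    (hB : B ∈ G) (hSA : S ⊆ A) (hSB : S ⊆ B) (hS : t ≤ #S)
    (hA' : ∀ C ∈ G, C ⊂ A → ¬ S ⊆ C) (hB' : ∀ C ∈ G, C ⊂ B → ¬ S ⊆ C) : A = B := by
  by_contra hne
  rcases hG.subset_or_subset_of_subset hA hB hSA hSB hS with h | h
  · exact hB' A hA (ssubset_of_subset_of_ne h hne) hSA
  · exact hA' B hB (ssubset_of_subset_of_ne h (Ne.symm hne)) hSB

lemma card_filter_not_isCoveredBelow_le [Fintype α] (hG : IsTLaminar t G) (ht : 0 < t)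
    (hGcard : ∀ A ∈ G, t ≤ #A) :
    #{A ∈ G | ¬ IsCoveredBelow G A} ≤ (Fintype.card α).choose t := by
  have hS : ∀ A ∈ {A ∈ G | ¬ IsCoveredBelow G A},
      ∃ S ⊆ A, #S = t ∧ ∀ B ∈ G, B ⊂ A → ¬ S ⊆ B := fun A hA =>
    exists_subset_card_eq_not_subset_of_not_isCoveredBelow (mem_filter.1 hA).2 ht
      (hGcard A (mem_filter.1 hA).1)
  choose! S hSA hScard hSnot using hS
  calc #{A ∈ G | ¬ IsCoveredBelow G A}
      ≤ #(powersetCard t (univ : Finset α)) := by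
        refine card_le_card_of_injOn S (fun A hA => ?_) (fun A hA B hB hAB => ?_)
        · exact mem_powersetCard.2 ⟨subset_univ _, hScard A hA⟩
        · refine hG.eq_of_subset_of_forall_not_subset (mem_filter.1 hA).1 (mem_filter.1 hB).1
            (hSA A hA) (hAB ▸ hSA B hB) (hScard A hA).ge (hSnot A hA) ?_
          simpa only [hAB] using hSnot B hB
    _ = (Fintype.card α).choose t := by rw [card_powersetCard, card_univ]

lemma exists_maximal_not_subset_of_isCoveredBelow (hG : IsTLaminar t G) {A L : Finset α}
    (hA : A.Nonempty) (hcov : IsCoveredBelow G A) (hL : t ≤ #L) :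
    ∃ D, Maximal (· ∈ {B ∈ G | B ⊂ A}) D ∧ ¬ L ⊆ D := by
  by_contra! hall
  have hchild : ∀ x ∈ A, ∃ D, Maximal (· ∈ {B ∈ G | B ⊂ A}) D ∧ x ∈ D := fun x hx => by
    obtain ⟨B, hB, hBA, hxB⟩ := hcov x hx
    obtain ⟨D, hBD, hD⟩ := exists_le_maximal {B ∈ G | B ⊂ A} (mem_filter.2 ⟨hB, hBA⟩)
    exact ⟨D, hD, hBD hxB⟩
  obtain ⟨x, hx⟩ := hA
  obtain ⟨D, hD, -⟩ := hchild x hx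
  have hAD : A ⊆ D := fun y hy => by
    obtain ⟨D', hD', hyD'⟩ := hchild y hy
    rwa [hG.eq_of_maximal (filter_subset _ _) hD hD' (hall D hD) (hall D' hD') hL]
  exact (mem_filter.1 hD.1).2.not_subset hAD

/-- The smaller member would lie in the chosen child of the larger, and then coherence of `m`
forces its own chosen leaf into its chosen child. -/
lemma not_ssubset_of_leafChoice_eq (hG : IsTLaminar t G) {m : Finset α → Finset α}
    (hm : IsLeafChoice G m) {A₁ A₂ D₁ D₂ : Finset α} (hA₁ : A₁ ∈ G)
    (hD₁ : Maximal (· ∈ {B ∈ G | B ⊂ A₁}) D₁) (hD₂ : Maximal (· ∈ {B ∈ G | B ⊂ A₂}) D₂)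
    (hmD₁ : ¬ m A₁ ⊆ D₁) (heq : m D₁ = m D₂) (ht : t ≤ #(m D₁)) : ¬ A₁ ⊂ A₂ := by
  intro hA₁₂
  obtain ⟨hD₁G, hD₁A₁⟩ := mem_filter.1 hD₁.1
  have hD₂G := (mem_filter.1 hD₂.1).1
  have hLD₁ : m D₁ ⊆ D₁ := hm.subset D₁ hD₁G
  have hLA₁ : m D₁ ⊆ A₁ := hLD₁.trans hD₁A₁.subset
  obtain ⟨D, hA₁D, hD⟩ := exists_le_maximal {B ∈ G | B ⊂ A₂} (mem_filter.2 ⟨hA₁, hA₁₂⟩)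
  have hDD₂ : D = D₂ := hG.eq_of_maximal (filter_subset _ _) hD hD₂
    (hLA₁.trans hA₁D) (heq ▸ hm.subset D₂ hD₂G) ht
  have hA₁D₂ : A₁ ⊆ D₂ := hDD₂ ▸ hA₁D
  have hmA₁ : m A₁ = m D₁ := (hm.eq_of_subset D₂ hD₂G A₁ hA₁D₂ (heq ▸ hLA₁)).trans heq.symm
  exact hmD₁ (hmA₁ ▸ hLD₁)

lemma card_filter_isCoveredBelow_le (hG : IsTLaminar t G) (ht : 0 < t)
    (hGcard : ∀ A ∈ G, t ≤ #A) :
    #{A ∈ G | IsCoveredBelow G A} ≤ #{A ∈ G | ¬ IsCoveredBelow G A} := by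
  have hne : ∀ A ∈ G, A.Nonempty := fun A hA => card_pos.1 (ht.trans_le (hGcard A hA))
  obtain ⟨m, hm⟩ := exists_isLeafChoice G
  have hD : ∀ A ∈ {A ∈ G | IsCoveredBelow G A},
      ∃ D, Maximal (· ∈ {B ∈ G | B ⊂ A}) D ∧ ¬ m A ⊆ D := fun A hA =>
    hG.exists_maximal_not_subset_of_isCoveredBelow (hne A (mem_filter.1 hA).1)
      (mem_filter.1 hA).2 (hGcard _ (hm.minimal A (mem_filter.1 hA).1).1)
  choose! D hDmax hmD using hD
  have hDG : ∀ A ∈ {A ∈ G | IsCoveredBelow G A}, D A ∈ G := fun A hA =>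
    (mem_filter.1 (hDmax A hA).1).1
  refine card_le_card_of_injOn (fun A => m (D A)) (fun A hA => ?_) (fun A hA B hB hAB => ?_)
  · have hleaf := hm.minimal _ (hDG A hA)
    exact mem_filter.2 ⟨hleaf.1, not_isCoveredBelow_of_minimal hleaf (hne _ hleaf.1)⟩
  · simp only at hAB
    have hA' := (mem_filter.1 hA).1
    have hB' := (mem_filter.1 hB).1
    have htL : t ≤ #(m (D A)) := hGcard _ (hm.minimal _ (hDG A hA)).1
    have hLA : m (D A) ⊆ A :=
      (hm.subset _ (hDG A hA)).trans (mem_filter.1 (hDmax A hA).1).2.subset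
    have hLB : m (D A) ⊆ B :=
      hAB ▸ (hm.subset _ (hDG B hB)).trans (mem_filter.1 (hDmax B hB).1).2.subset
    by_contra hAB'
    rcases hG.subset_or_subset_of_subset hA' hB' hLA hLB htL with h | h
    · exact hG.not_ssubset_of_leafChoice_eq hm hA' (hDmax A hA) (hDmax B hB) (hmD A hA) hAB
        htL (ssubset_of_subset_of_ne h hAB')
    · exact hG.not_ssubset_of_leafChoice_eq hm hB' (hDmax B hB) (hDmax A hA) (hmD B hB)
        hAB.symm (hAB ▸ htL) (ssubset_of_subset_of_ne h (Ne.symm hAB'))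

end IsTLaminar

lemma card_filter_card_lt_le [Fintype α] (F : Finset (Finset α)) (hα : 0 < Fintype.card α)
    (t : ℕ) : #{A ∈ F | #A < t} ≤ t * Fintype.card α ^ t :=
  calc #{A ∈ F | #A < t}
      ≤ #((range t).biUnion fun i => powersetCard i (univ : Finset α)) :=
        card_le_card fun A hA => mem_biUnion.2
          ⟨#A, mem_range.2 (mem_filter.1 hA).2, mem_powersetCard.2 ⟨subset_univ _, rfl⟩⟩
    _ ≤ ∑ i ∈ range t, #(powersetCard i (univ : Finset α)) := card_biUnion_le
    _ ≤ ∑ _i ∈ range t, Fintype.card α ^ t := sum_le_sum fun i hi => by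
        rw [card_powersetCard, card_univ]
        exact (Nat.choose_le_pow _ _).trans (pow_le_pow_right₀ hα (mem_range.1 hi).le)
    _ = t * Fintype.card α ^ t := by rw [sum_const, card_range, smul_eq_mul]

/-- For every positive integer `t` there is a constant `C` such that every `t`-laminar
family of subsets of `[n]` has at most `C·n^t` members. -/
theorem tLaminar_card_le (t : ℕ) (ht : 0 < t) :
    ∃ C : ℕ, ∀ n : ℕ, 0 < n → ∀ F : Finset (Finset (Fin n)),
      (∀ A ∈ F, ∀ B ∈ F, t ≤ (A ∩ B).card → A ⊆ B ∨ B ⊆ A) →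
      F.card ≤ C * n ^ t := by
  refine ⟨t + 2, fun n hn F hF => ?_⟩
  set G := {A ∈ F | t ≤ #A}
  have hG : IsTLaminar t G := IsTLaminar.mono hF (filter_subset _ _)
  have hGcard : ∀ A ∈ G, t ≤ #A := fun A hA => (mem_filter.1 hA).2
  have hcov := hG.card_filter_isCoveredBelow_le ht hGcard
  have huncov : #{A ∈ G | ¬ IsCoveredBelow G A} ≤ n.choose t := by
    simpa using hG.card_filter_not_isCoveredBelow_le ht hGcard
  have hsmall : #{A ∈ F | ¬ t ≤ #A} ≤ t * n ^ t := by
    simpa using card_filter_card_lt_le F (by simpa using hn) t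
  have hGsplit : #{A ∈ G | IsCoveredBelow G A} + #{A ∈ G | ¬ IsCoveredBelow G A} = #G :=
    card_filter_add_card_filter_not _
  have hFsplit : #G + #{A ∈ F | ¬ t ≤ #A} = #F := card_filter_add_card_filter_not _
  have hchoose := Nat.choose_le_pow n t
  linarith
end
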